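/- arXiv:1805.01648 — 4 statements merged into one kernel-verified Lean document; each statement's English description precedes it below -/
import Mathlib

section
/- For all r ≥ 0, (1/2)·exp(-α R²)·r ≤ (1/2)·Ψ(r) ≤ f(r) ≤ Ψ(r) ≤ r, where f(r) = ∫₀^r ψ(s)g(s) ds. -/
/-!
The pointwise bounds `exp (-α R²) ≤ ψ ≤ 1` and `1/2 ≤ g ≤ 1` on `[0, ∞)` are integrated over
`[0, r]`. The bound on `g` holds because the ratio in its definition is the integral of the
nonnegative function `Ψ/ψ` over `[0, min r R]` divided by its integral over `[0, R]`, hence lies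
in `[0, 1]`.
-/

open Real MeasureTheory intervalIntegral

/-- The auxiliary function ψ(r) = exp(-α·min{r², R²}). -/
noncomputable def psiE (α R r : ℝ) : ℝ := Real.exp (-(α * min (r ^ 2) (R ^ 2)))

/-- Ψ(r) = ∫₀ʳ ψ(s) ds. -/
noncomputable def PsiE (α R r : ℝ) : ℝ := ∫ s in (0:ℝ)..r, psiE α R s

/-- g(r) = 1 - (1/2)·(∫₀^{min{r,R}} Ψ/ψ)/(∫₀^R Ψ/ψ). -/
noncomputable def gEb (α R r : ℝ) : ℝ :=
  1 - (1 / 2) * (∫ s in (0:ℝ)..(min r R), PsiE α R s / psiE α R s) /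
      (∫ s in (0:ℝ)..R, PsiE α R s / psiE α R s)

/-- The Eberle distance function f(r) = ∫₀ʳ ψ(s)·g(s) ds. -/
noncomputable def fEb (α R r : ℝ) : ℝ := ∫ s in (0:ℝ)..r, psiE α R s * gEb α R s

theorem integral_min_div_integral_mem_Icc {h : ℝ → ℝ} (hh : ∀ s, 0 ≤ s → 0 ≤ h s)
    (hc : Continuous h) {r R : ℝ} (hr : 0 ≤ r) :
    (∫ s in (0:ℝ)..(min r R), h s) / (∫ s in (0:ℝ)..R, h s) ∈ Set.Icc 0 1 := by
  rcases le_total r R with hrR | hRr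
  · have hmono : ∫ s in (0:ℝ)..r, h s ≤ ∫ s in (0:ℝ)..R, h s :=
      integral_mono_interval le_rfl hr hrR
        ((ae_restrict_mem measurableSet_Ioc).mono fun s hs => hh s hs.1.le)
        (hc.intervalIntegrable 0 R)
    have hnonneg : 0 ≤ ∫ s in (0:ℝ)..r, h s := integral_nonneg hr fun s hs => hh s hs.1
    rw [min_eq_left hrR]
    have hden : 0 ≤ ∫ s in (0:ℝ)..R, h s := hnonneg.trans hmono
    exact ⟨div_nonneg hnonneg hden, div_le_one_of_le₀ hmono hden⟩
  · rw [min_eq_right hRr]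
    rcases eq_or_ne (∫ s in (0:ℝ)..R, h s) 0 with h0 | h0 <;> simp [h0]

section

variable {α R : ℝ}

theorem continuous_psiE : Continuous (psiE α R) := by
  unfold psiE
  fun_prop

theorem psiE_pos (r : ℝ) : 0 < psiE α R r := exp_pos _

theorem psiE_le_one (hα : 0 ≤ α) (r : ℝ) : psiE α R r ≤ 1 :=
  exp_le_one_iff.2 <| neg_nonpos.2 <| mul_nonneg hα <| le_min (sq_nonneg r) (sq_nonneg R)

theorem exp_neg_mul_sq_le_psiE (hα : 0 ≤ α) (r : ℝ) : exp (-(α * R ^ 2)) ≤ psiE α R r :=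
  exp_le_exp.2 <| neg_le_neg <| mul_le_mul_of_nonneg_left (min_le_right _ _) hα

theorem continuous_PsiE : Continuous (PsiE α R) :=
  continuous_primitive (fun a b => continuous_psiE.intervalIntegrable a b) 0

theorem PsiE_nonneg {r : ℝ} (hr : 0 ≤ r) : 0 ≤ PsiE α R r :=
  integral_nonneg hr fun s _ => (psiE_pos s).le

theorem continuous_PsiE_div_psiE : Continuous fun s => PsiE α R s / psiE α R s :=
  continuous_PsiE.div continuous_psiE fun s => (psiE_pos s).ne'

theorem continuous_gEb : Continuous (gEb α R) := by
  have hnum : Continuous fun r => ∫ s in (0:ℝ)..(min r R), PsiE α R s / psiE α R s :=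
    (continuous_primitive (fun a b => continuous_PsiE_div_psiE.intervalIntegrable a b) 0).comp
      (continuous_id.min continuous_const)
  unfold gEb
  fun_prop

theorem gEb_mem_Icc {r : ℝ} (hr : 0 ≤ r) : gEb α R r ∈ Set.Icc (1 / 2) 1 := by
  have hq := integral_min_div_integral_mem_Icc (R := R)
    (h := fun s => PsiE α R s / psiE α R s)
    (fun s hs => div_nonneg (PsiE_nonneg hs) (psiE_pos s).le) continuous_PsiE_div_psiE hr
  rw [gEb, mul_div_assoc]
  generalize (_ : ℝ) / _ = q at hq ⊢
  exact ⟨by linarith [hq.2], by linarith [hq.1]⟩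

variable {r : ℝ}

theorem exp_neg_mul_sq_mul_le_PsiE (hr : 0 ≤ r) (hα : 0 ≤ α) :
    exp (-(α * R ^ 2)) * r ≤ PsiE α R r :=
  calc
    exp (-(α * R ^ 2)) * r = ∫ _ in (0:ℝ)..r, exp (-(α * R ^ 2)) := by simp [mul_comm]
    _ ≤ PsiE α R r := integral_mono_on hr (continuous_const.intervalIntegrable 0 r)
      (continuous_psiE.intervalIntegrable 0 r) fun s _ => exp_neg_mul_sq_le_psiE hα s

theorem PsiE_le_self (hr : 0 ≤ r) (hα : 0 ≤ α) : PsiE α R r ≤ r :=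
  calc
    PsiE α R r ≤ ∫ _ in (0:ℝ)..r, (1 : ℝ) := integral_mono_on hr
      (continuous_psiE.intervalIntegrable 0 r) (continuous_const.intervalIntegrable 0 r)
      fun s _ => psiE_le_one hα s
    _ = r := by simp

theorem half_PsiE_le_fEb (hr : 0 ≤ r) : 1 / 2 * PsiE α R r ≤ fEb α R r := by
  rw [PsiE, ← intervalIntegral.integral_const_mul]
  refine integral_mono_on hr ((continuous_psiE.intervalIntegrable 0 r).const_mul _)
    ((continuous_psiE.mul continuous_gEb).intervalIntegrable 0 r) fun s hs => ?_
  rw [mul_comm]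
  exact mul_le_mul_of_nonneg_left (gEb_mem_Icc hs.1).1 (psiE_pos s).le

theorem fEb_le_PsiE (hr : 0 ≤ r) : fEb α R r ≤ PsiE α R r :=
  integral_mono_on hr ((continuous_psiE.mul continuous_gEb).intervalIntegrable 0 r)
    (continuous_psiE.intervalIntegrable 0 r) fun s hs =>
      mul_le_of_le_one_right (psiE_pos s).le (gEb_mem_Icc hs.1).2

end

theorem f_sandwich_general (α R : ℝ) (hα : 0 < α) :
    ∀ r : ℝ, 0 ≤ r →
      (1 / 2) * Real.exp (-(α * R ^ 2)) * r ≤ (1 / 2) * PsiE α R r ∧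
      (1 / 2) * PsiE α R r ≤ fEb α R r ∧
      fEb α R r ≤ PsiE α R r ∧
      PsiE α R r ≤ r := fun r hr =>
  ⟨mul_assoc (1 / 2 : ℝ) _ r ▸
      mul_le_mul_of_nonneg_left (exp_neg_mul_sq_mul_le_PsiE hr hα.le) one_half_pos.le,
    half_PsiE_le_fEb hr, fEb_le_PsiE hr, PsiE_le_self hr hα.le⟩

/-- (1/2)·exp(-αR²)·r ≤ (1/2)·Ψ(r) ≤ f(r) ≤ Ψ(r) ≤ r for all r ≥ 0. -/
theorem f_sandwich (α R : ℝ) (hα : 0 < α) (hR : 0 < R) :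
    ∀ r : ℝ, 0 ≤ r →
      (1 / 2) * Real.exp (-(α * R ^ 2)) * r ≤ (1 / 2) * PsiE α R r ∧
      (1 / 2) * PsiE α R r ≤ fEb α R r ∧
      fEb α R r ≤ PsiE α R r ∧
      PsiE α R r ≤ r :=
  f_sandwich_general α R hα
end

section
/- For any 0 < c < 1 and r ≥ 0, f((1+c)r) ≥ (1 + (c/2)·exp(-α R²)) · f(r), where f(r) = ∫₀^r ψ(s)g(s) ds. -/
open Real MeasureTheory intervalIntegral

/-! If `m ≤ h ≤ 1` on `[0, ∞)`, then `F(r) = ∫₀ʳ h` satisfies `F(r) ≤ r`, while `F` grows by at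
least `m·c·r` between `r` and `(1 + c)r`; hence `F((1 + c)r) ≥ F(r) + c·m·F(r)`. For the Eberle
integrand `h = ψ·g` one has `ψ ≥ exp(-αR²)` and `g ∈ [1/2, 1]`, so `m = exp(-αR²)/2`. -/

theorem integral_le_of_le_one {h : ℝ → ℝ} (hh : Continuous h) {r : ℝ} (hr : 0 ≤ r)
    (h_le : ∀ s, 0 ≤ s → h s ≤ 1) : ∫ s in (0:ℝ)..r, h s ≤ r := by
  simpa using integral_mono_on hr (hh.intervalIntegrable 0 r)
    (intervalIntegrable_const (μ := volume))
    fun s hs => h_le s hs.1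

theorem mul_sub_le_integral {h : ℝ → ℝ} (hh : Continuous h) {m a b : ℝ} (ha : 0 ≤ a)
    (hab : a ≤ b) (le_h : ∀ s, 0 ≤ s → m ≤ h s) : m * (b - a) ≤ ∫ s in a..b, h s := by
  have := integral_mono_on hab (intervalIntegrable_const (μ := volume)) (hh.intervalIntegrable a b)
    fun s hs => le_h s (ha.trans hs.1)
  rwa [intervalIntegral.integral_const, smul_eq_mul, mul_comm] at this

theorem integral_dilation_lower_bound {h : ℝ → ℝ} (hh : Continuous h) {m c r : ℝ}
    (hm : 0 ≤ m) (hc : 0 ≤ c) (hr : 0 ≤ r) (le_h : ∀ s, 0 ≤ s → m ≤ h s)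
    (h_le : ∀ s, 0 ≤ s → h s ≤ 1) :
    (1 + c * m) * ∫ s in (0:ℝ)..r, h s ≤ ∫ s in (0:ℝ)..(1 + c) * r, h s := by
  have hr_le : r ≤ (1 + c) * r := by nlinarith
  have h_split := integral_add_adjacent_intervals (hh.intervalIntegrable (μ := volume) 0 r)
    (hh.intervalIntegrable r ((1 + c) * r))
  have h_head := integral_le_of_le_one hh hr h_le
  have h_tail := mul_sub_le_integral hh hr hr_le le_h
  rw [← h_split]
  nlinarith [mul_le_mul_of_nonneg_left h_head (mul_nonneg hc hm)]

section Eberle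

variable {α R : ℝ}

theorem PsiE_div_psiE_nonneg {s : ℝ} (hs : 0 ≤ s) : 0 ≤ PsiE α R s / psiE α R s :=
  div_nonneg (PsiE_nonneg hs) (psiE_pos s).le

-- For `R ≤ 0 ≤ r` the ratio is `D / D`, which is `0` rather than `1` when `D = 0`.
theorem gEb_ratio_mem_Icc {r : ℝ} (hr : 0 ≤ r) :
    (∫ s in (0:ℝ)..(min r R), PsiE α R s / psiE α R s) /
      (∫ s in (0:ℝ)..R, PsiE α R s / psiE α R s) ∈ Set.Icc 0 1 := by
  set D := ∫ s in (0:ℝ)..R, PsiE α R s / psiE α R s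
  rcases le_total R 0 with hR | hR
  · rw [min_eq_right (hR.trans hr)]
    refine ⟨?_, div_self_le_one D⟩
    rcases eq_or_ne D 0 with hD | hD
    · rw [hD, div_zero]
    · rw [div_self hD]
      exact zero_le_one
  · have hN : 0 ≤ ∫ s in (0:ℝ)..(min r R), PsiE α R s / psiE α R s :=
      integral_nonneg (le_min hr hR) fun s hs => PsiE_div_psiE_nonneg hs.1
    have hND : ∫ s in (0:ℝ)..(min r R), PsiE α R s / psiE α R s ≤ D :=
      integral_mono_interval le_rfl (le_min hr hR) (min_le_right r R)
        (ae_restrict_of_forall_mem measurableSet_Ioc fun s hs => PsiE_div_psiE_nonneg hs.1.le)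
        (continuous_PsiE_div_psiE.intervalIntegrable _ _)
    exact ⟨div_nonneg hN (hN.trans hND), div_le_one_of_le₀ hND (hN.trans hND)⟩

theorem exp_neg_mul_sq_div_two_le_psiE_mul_gEb (hα : 0 ≤ α) {s : ℝ} (hs : 0 ≤ s) :
    exp (-(α * R ^ 2)) / 2 ≤ psiE α R s * gEb α R s := by
  have hg := (gEb_mem_Icc (α := α) (R := R) hs).1
  have hψ := exp_neg_mul_sq_le_psiE (R := R) hα s
  calc exp (-(α * R ^ 2)) / 2 = exp (-(α * R ^ 2)) * (1 / 2) := by ring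
    _ ≤ psiE α R s * gEb α R s := mul_le_mul hψ hg (by norm_num) (psiE_pos s).le

theorem psiE_mul_gEb_le_one (hα : 0 ≤ α) {s : ℝ} (hs : 0 ≤ s) : psiE α R s * gEb α R s ≤ 1 :=
  mul_le_one₀ (psiE_le_one hα s) (by linarith [(gEb_mem_Icc (α := α) (R := R) hs).1])
    (gEb_mem_Icc hs).2

end Eberle

theorem f_dilation_lower_bound_general (α R : ℝ) (hα : 0 < α) :
    ∀ c : ℝ, 0 < c → c < 1 → ∀ r : ℝ, 0 ≤ r →
      (1 + (c / 2) * Real.exp (-(α * R ^ 2))) * fEb α R r ≤ fEb α R ((1 + c) * r) := by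
  intro c hc _ r hr
  calc (1 + (c / 2) * exp (-(α * R ^ 2))) * fEb α R r
      = (1 + c * (exp (-(α * R ^ 2)) / 2)) * fEb α R r := by ring
    _ ≤ fEb α R ((1 + c) * r) :=
      integral_dilation_lower_bound (continuous_psiE.mul continuous_gEb) (by positivity) hc.le hr
        (fun _ => exp_neg_mul_sq_div_two_le_psiE_mul_gEb hα.le)
        (fun _ => psiE_mul_gEb_le_one hα.le)

/-- f((1+c)r) ≥ (1 + (c/2)·exp(-αR²))·f(r) for 0 < c < 1, r ≥ 0. -/
theorem f_dilation_lower_bound (α R : ℝ) (hα : 0 < α) (hR : 0 < R) :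
    ∀ c : ℝ, 0 < c → c < 1 → ∀ r : ℝ, 0 ≤ r →
      (1 + (c / 2) * Real.exp (-(α * R ^ 2))) * fEb α R r ≤ fEb α R ((1 + c) * r) :=
  f_dilation_lower_bound_general α R hα
end

section
/- Let z, w ∈ ℝᵈ, let U : ℝᵈ → ℝ have L-Lipschitz gradient and satisfy ⟨∇U(x) - ∇U(y), x - y⟩ ≥ m‖x-y‖² whenever ‖x-y‖ > R, and write κ = L/m ≥ 1, c = 1000, ∇ = ∇U(x) - ∇U(y) with z = x - y. If ‖z‖² + ‖z+w‖² ≥ 2.2 R², then ⟨(z, z+w), (w, -w - (1/(cκL))∇)⟩ ≤ -(1/(3(cκ)²))·(‖z‖² + ‖z+w‖²), where the inner product on ℝ^{2d} is the sum of the coordinate-wise inner products. -/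
/-!
With `ε = 1/(cκ) ≤ 1/1000` the drift equals `-‖w‖² - (ε/L)⟪z + w, ∇⟫`, and Cauchy–Schwarz with
the Lipschitz bound `‖∇‖ ≤ L‖z‖` gives `⟪z + w, ∇⟫ ≥ ⟪z, ∇⟫ - L‖z‖‖w‖`. If `‖z‖ > R`, strong
convexity gives `⟪z, ∇⟫ ≥ m‖z‖²` and the resulting quadratic form in `(‖z‖, ‖w‖)` dominates
`ε²/3 (‖z‖² + ‖z + w‖²)`. If `‖z‖ ≤ R`, only `⟪z, ∇⟫ ≥ -L‖z‖²` is available, but then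
`‖z‖² + ‖z + w‖² ≥ 2.2R²` forces `‖z‖ ≤ 11‖w‖`, and `-‖w‖²` absorbs everything since `ε` is small.
-/

open Real InnerProductSpace

section Scalar

variable {ε a b n : ℝ}

lemma le_eleven_mul_of_two_point_two_sq_le {R : ℝ} (ha : 0 ≤ a) (hb : 0 ≤ b) (hn0 : 0 ≤ n)
    (hn : n ≤ a + b) (haR : a ≤ R) (hfar : 2.2 * R ^ 2 ≤ a ^ 2 + n ^ 2) : a ≤ 11 * b := by
  have hR : 0 ≤ R := ha.trans haR
  have hsq : R ^ 2 ≤ 5 * b ^ 2 + 10 * b * R := by nlinarith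
  have hRb : R ≤ 11 * b := by nlinarith [mul_nonneg hb hR]
  linarith

lemma drift_scalar_far (hε0 : 0 ≤ ε) (hε : ε ≤ 1 / 1000) (hn0 : 0 ≤ n) (hn : n ≤ a + b) :
    -b ^ 2 - ε * (1000 * ε * a ^ 2 - a * b) ≤ -(ε ^ 2 / 3) * (a ^ 2 + n ^ 2) := by
  have hn2 : n ^ 2 ≤ (a + b) ^ 2 := pow_le_pow_left₀ hn0 hn 2
  nlinarith [sq_nonneg (b - ε * a), mul_nonneg (sq_nonneg ε) (sq_nonneg (a - b)),
    mul_nonneg (sq_nonneg ε) (sub_nonneg.2 hn2), mul_nonneg hε0 (sub_nonneg.2 hε)]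

lemma drift_scalar_near (hε0 : 0 ≤ ε) (hε : ε ≤ 1 / 1000) (ha : 0 ≤ a) (hn0 : 0 ≤ n)
    (hn : n ≤ a + b) (hab : a ≤ 11 * b) :
    -b ^ 2 - ε * (-1 * a ^ 2 - a * b) ≤ -(ε ^ 2 / 3) * (a ^ 2 + n ^ 2) := by
  have hn2 : n ^ 2 ≤ (12 * b) ^ 2 := pow_le_pow_left₀ hn0 (by linarith) 2
  have ha2 : a ^ 2 ≤ (11 * b) ^ 2 := pow_le_pow_left₀ ha hab 2
  have hab' : a * b ≤ 11 * b ^ 2 := by nlinarith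
  nlinarith [mul_le_mul_of_nonneg_left hε (sq_nonneg b), mul_nonneg hε0 (sq_nonneg b)]

end Scalar

section InnerProduct

variable {E : Type*} [NormedAddCommGroup E] [InnerProductSpace ℝ E] {L : ℝ} {z w g : E}

lemma neg_mul_le_inner_of_norm_le (hg : ‖g‖ ≤ L * ‖z‖) (v : E) :
    -(L * ‖z‖ * ‖v‖) ≤ ⟪v, g⟫_ℝ := by
  have hcs := neg_le_of_abs_le (abs_real_inner_le_norm v g)
  nlinarith [mul_le_mul_of_nonneg_left hg (norm_nonneg v)]

lemma inner_drift_le {ε μ : ℝ} (hL : 0 < L) (hε : 0 ≤ ε) (hg : ‖g‖ ≤ L * ‖z‖)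
    (hμ : L * μ * ‖z‖ ^ 2 ≤ ⟪z, g⟫_ℝ) :
    ⟪z, w⟫_ℝ + ⟪z + w, -w - (ε / L) • g⟫_ℝ ≤ -‖w‖ ^ 2 - ε * (μ * ‖z‖ ^ 2 - ‖z‖ * ‖w‖) := by
  have hcross := neg_mul_le_inner_of_norm_le hg w
  have hsum : L * (μ * ‖z‖ ^ 2 - ‖z‖ * ‖w‖) ≤ ⟪z + w, g⟫_ℝ := by
    rw [inner_add_left]; linarith
  have hdrift : ⟪z, w⟫_ℝ + ⟪z + w, -w - (ε / L) • g⟫_ℝ = -‖w‖ ^ 2 - ε / L * ⟪z + w, g⟫_ℝ := by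
    simp only [inner_sub_right, inner_neg_right, real_inner_smul_right, inner_add_left,
      real_inner_self_eq_norm_sq]
    ring
  have hscaled : ε * (μ * ‖z‖ ^ 2 - ‖z‖ * ‖w‖) ≤ ε / L * ⟪z + w, g⟫_ℝ := by
    rw [div_mul_eq_mul_div, le_div_iff₀ hL]
    nlinarith [mul_le_mul_of_nonneg_left hsum hε]
  linarith

end InnerProduct

theorem sync_drift_contraction_general {d : ℕ} (L m R : ℝ) (hm : 0 < m) (hLm : m ≤ L)
    (U : EuclideanSpace ℝ (Fin d) → ℝ)
    (hlip : ∀ a b : EuclideanSpace ℝ (Fin d),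
      ‖gradient U a - gradient U b‖ ≤ L * ‖a - b‖)
    (hsc : ∀ a b : EuclideanSpace ℝ (Fin d), R < ‖a - b‖ →
      m * ‖a - b‖ ^ 2 ≤ ⟪gradient U a - gradient U b, a - b⟫_ℝ)
    (x y w : EuclideanSpace ℝ (Fin d))
    (hfar : 2.2 * R ^ 2 ≤ ‖x - y‖ ^ 2 + ‖(x - y) + w‖ ^ 2) :
    ⟪x - y, w⟫_ℝ +
      ⟪(x - y) + w, -w - (1 / (1000 * (L / m) * L)) • (gradient U x - gradient U y)⟫_ℝ ≤
      -(1 / (3 * (1000 * (L / m)) ^ 2)) * (‖x - y‖ ^ 2 + ‖(x - y) + w‖ ^ 2) := by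
  have hL : 0 < L := hm.trans_le hLm
  set ε := m / (1000 * L) with hε_def
  have hε0 : 0 ≤ ε := by positivity
  have hε : ε ≤ 1 / 1000 := by
    rw [hε_def, div_le_div_iff₀ (by positivity) (by norm_num)]; linarith
  have hstep : 1 / (1000 * (L / m) * L) = ε / L := by rw [hε_def]; field_simp
  have hrate : 1 / (3 * (1000 * (L / m)) ^ 2) = ε ^ 2 / 3 := by rw [hε_def]; field_simp
  rw [hstep, hrate]
  have hgrad := hlip x y
  have htri := norm_add_le (x - y) w
  rcases le_or_gt ‖x - y‖ R with hnear | hfar'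
  · refine (inner_drift_le hL hε0 hgrad (μ := -1) ?_).trans <| drift_scalar_near hε0 hε
      (norm_nonneg _) (norm_nonneg _) htri <| le_eleven_mul_of_two_point_two_sq_le
      (norm_nonneg _) (norm_nonneg _) (norm_nonneg _) htri hnear hfar
    simpa [sq, mul_assoc] using neg_mul_le_inner_of_norm_le hgrad (x - y)
  · refine (inner_drift_le hL hε0 hgrad (μ := 1000 * ε) ?_).trans <|
      drift_scalar_far hε0 hε (norm_nonneg _) htri
    rw [real_inner_comm, show L * (1000 * ε) = m by rw [hε_def]; field_simp]
    exact hsc x y hfar'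

/-- Key drift inequality for synchronous coupling of underdamped Langevin:
if ‖z‖² + ‖z+w‖² ≥ 2.2R², then
⟨(z, z+w), (w, -w - (1/(cκL))∇)⟩ ≤ -(1/(3(cκ)²))(‖z‖² + ‖z+w‖²), with c = 1000, κ = L/m. -/
theorem sync_drift_contraction {d : ℕ} (L m R : ℝ) (hm : 0 < m) (hLm : m ≤ L) (hR : 0 < R)
    (U : EuclideanSpace ℝ (Fin d) → ℝ) (hU : ContDiff ℝ 1 U)
    (hlip : ∀ a b : EuclideanSpace ℝ (Fin d),
      ‖gradient U a - gradient U b‖ ≤ L * ‖a - b‖)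
    (hsc : ∀ a b : EuclideanSpace ℝ (Fin d), R < ‖a - b‖ →
      m * ‖a - b‖ ^ 2 ≤ ⟪gradient U a - gradient U b, a - b⟫_ℝ)
    (x y w : EuclideanSpace ℝ (Fin d))
    (hfar : 2.2 * R ^ 2 ≤ ‖x - y‖ ^ 2 + ‖(x - y) + w‖ ^ 2) :
    ⟪x - y, w⟫_ℝ +
      ⟪(x - y) + w, -w - (1 / (1000 * (L / m) * L)) • (gradient U x - gradient U y)⟫_ℝ ≤
      -(1 / (3 * (1000 * (L / m)) ^ 2)) * (‖x - y‖ ^ 2 + ‖(x - y) + w‖ ^ 2) :=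
  sync_drift_contraction_general L m R hm hLm U hlip hsc x y w hfar
end

section
/- Let p* be a probability measure on ℝᵈ with density proportional to exp(-U(x)), where U is L-smooth, ∇U(0) = 0, and U is m-strongly convex outside a ball of radius R (i.e., ⟨∇U(x)-∇U(y), x-y⟩ ≥ m‖x-y‖² whenever ‖x-y‖ > R). Then the second moment of p* is bounded: E_{x∼p*}[‖x‖₂²] ≤ 2d/m + 18R². -/
/-!
Let `γ(t) = ((t - R)₊ / t)²`. The vector field `x ↦ γ(‖x‖) e^{-U(x)} x` has divergence
`(d γ + t γ'(t) - γ ⟪∇U x, x⟫) e^{-U(x)}` with `t = ‖x‖`; in polar coordinates its integral along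
each ray is a boundary term, so it integrates to zero. Hence
`∫ γ ⟪∇U x, x⟫ e^{-U} = ∫ (d γ + t γ') e^{-U} ≤ d Z`. Outside the ball of radius `R` we have
`⟪∇U x, x⟫ ≥ m ‖x‖²`, and `γ ≥ 1/2` beyond `4R`, so `‖x‖² ≤ 16 R² + (2 / m) γ ⟪∇U x, x⟫`
everywhere, which integrates to `E ‖x‖² ≤ 2d/m + 16 R²`. The Lipschitz bound on `∇U` gives
`U x ≥ U 0 + (m/4) ‖x‖² - C`, which makes every integral converge and every boundary term vanish.
-/

open Real MeasureTheory InnerProductSpace Filter Topology Set Metric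

theorem hasDerivAt_max_zero_sq (x : ℝ) :
    HasDerivAt (fun y : ℝ => max y 0 ^ 2) (2 * max x 0) x := by
  refine hasDerivAt_of_hasDerivAt_of_ne' (f := fun y : ℝ => max y 0 ^ 2)
    (g := fun y => 2 * max y 0) (x := 0) (fun y hy => ?_) (by fun_prop) (by fun_prop) x
  rcases hy.lt_or_gt with hy | hy
  · have h : (fun y : ℝ => max y 0 ^ 2) =ᶠ[𝓝 y] fun _ => 0 := by
      filter_upwards [Iio_mem_nhds hy] with z hz
      simp [max_eq_right (le_of_lt (show z < 0 from hz))]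
    simpa [max_eq_right hy.le] using (hasDerivAt_const y (0 : ℝ)).congr_of_eventuallyEq h
  · have h : (fun y : ℝ => max y 0 ^ 2) =ᶠ[𝓝 y] fun z => z ^ 2 := by
      filter_upwards [Ioi_mem_nhds hy] with z hz
      rw [max_eq_left (le_of_lt (show 0 < z from hz))]
    simpa [max_eq_left hy.le] using (hasDerivAt_pow 2 y).congr_of_eventuallyEq h

noncomputable def radialCutoff (c t : ℝ) : ℝ := max (t - c) 0 ^ 2 / t ^ 2

noncomputable def radialCutoffDeriv (c t : ℝ) : ℝ := 2 * c * max (t - c) 0 / t ^ 3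

/-- The divergence of `x ↦ γ(‖x‖) x` on an `n`-dimensional space, evaluated at `‖x‖ = t`. -/
noncomputable def radialCutoffDivergence (n : ℕ) (c t : ℝ) : ℝ :=
  n * radialCutoff c t + t * radialCutoffDeriv c t

section RadialCutoff

variable {c t : ℝ}

theorem radialCutoff_of_le (h : t ≤ c) : radialCutoff c t = 0 := by
  simp [radialCutoff, max_eq_right (sub_nonpos.2 h)]

theorem radialCutoffDeriv_of_le (h : t ≤ c) : radialCutoffDeriv c t = 0 := by
  simp [radialCutoffDeriv, max_eq_right (sub_nonpos.2 h)]

theorem radialCutoff_nonneg : 0 ≤ radialCutoff c t := by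
  unfold radialCutoff; positivity

theorem radialCutoff_le_one (hc : 0 ≤ c) : radialCutoff c t ≤ 1 := by
  rcases le_or_gt t c with h | h
  · simp [radialCutoff_of_le h]
  · rw [radialCutoff, max_eq_left (by linarith), div_le_one (by nlinarith)]
    nlinarith

theorem one_half_le_radialCutoff (hc : 0 ≤ c) (h : 4 * c ≤ t) (ht : 0 < t) :
    1 / 2 ≤ radialCutoff c t := by
  rw [radialCutoff, max_eq_left (by linarith), le_div_iff₀ (by positivity)]
  nlinarith

theorem mul_radialCutoffDeriv_nonneg (hc : 0 ≤ c) (ht : 0 ≤ t) :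
    0 ≤ t * radialCutoffDeriv c t := by
  unfold radialCutoffDeriv; positivity

theorem mul_radialCutoffDeriv_le_two (hc : 0 ≤ c) : t * radialCutoffDeriv c t ≤ 2 := by
  rcases le_or_gt t c with h | h
  · simp [radialCutoffDeriv_of_le h]
  · have ht : 0 < t := by linarith
    rw [radialCutoffDeriv, max_eq_left (by linarith), mul_div_assoc', div_le_iff₀ (by positivity)]
    nlinarith [mul_nonneg ht.le (add_nonneg (sq_nonneg (t - c)) (mul_nonneg hc ht.le))]

theorem radialCutoffDivergence_nonneg {n : ℕ} (hc : 0 ≤ c) (ht : 0 ≤ t) :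
    0 ≤ radialCutoffDivergence n c t :=
  add_nonneg (mul_nonneg n.cast_nonneg radialCutoff_nonneg) (mul_radialCutoffDeriv_nonneg hc ht)

theorem radialCutoffDivergence_le_add_two {n : ℕ} (hc : 0 ≤ c) :
    radialCutoffDivergence n c t ≤ n + 2 := by
  unfold radialCutoffDivergence
  linarith [mul_le_of_le_one_right n.cast_nonneg (radialCutoff_le_one hc (t := t)),
    mul_radialCutoffDeriv_le_two hc (t := t)]

theorem radialCutoffDivergence_le {n : ℕ} (hn : 1 ≤ n) (hc : 0 ≤ c) :
    radialCutoffDivergence n c t ≤ n := by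
  rcases le_or_gt t c with h | h
  · simp [radialCutoffDivergence, radialCutoff_of_le h, radialCutoffDeriv_of_le h]
  · have ht : 0 < t := by linarith
    have hn' : (1 : ℝ) ≤ n := by exact_mod_cast hn
    rw [radialCutoffDivergence, radialCutoff, radialCutoffDeriv, max_eq_left (by linarith)]
    rw [show (n : ℝ) * ((t - c) ^ 2 / t ^ 2) + t * (2 * c * (t - c) / t ^ 3)
        = (n * (t - c) ^ 2 + 2 * c * (t - c)) / t ^ 2 by field_simp, div_le_iff₀ (by positivity)]
    nlinarith [mul_nonneg (mul_nonneg (sub_nonneg.2 hn') hc) (by linarith : (0:ℝ) ≤ 2 * t - c)]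

theorem hasDerivAt_radialCutoff (hc : 0 < c) (t : ℝ) :
    HasDerivAt (radialCutoff c) (radialCutoffDeriv c t) t := by
  rcases lt_or_ge t c with h | h
  · have hzero : radialCutoff c =ᶠ[𝓝 t] fun _ => 0 := by
      filter_upwards [Iio_mem_nhds h] with s hs using radialCutoff_of_le (le_of_lt hs)
    rw [radialCutoffDeriv_of_le h.le]
    exact (hasDerivAt_const t 0).congr_of_eventuallyEq hzero
  · have ht : 0 < t := hc.trans_le h
    have hquot := ((hasDerivAt_max_zero_sq (t - c)).comp t
      ((hasDerivAt_id t).sub_const c)).fun_div (hasDerivAt_pow 2 t) (by positivity)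
    refine hquot.congr_deriv ?_
    simp only [radialCutoffDeriv, Function.comp, id, max_eq_left (sub_nonneg.2 h)]
    field_simp
    ring

theorem continuous_radialCutoff (hc : 0 < c) : Continuous (radialCutoff c) :=
  continuous_iff_continuousAt.2 fun t => (hasDerivAt_radialCutoff hc t).continuousAt

theorem measurable_radialCutoffDivergence (n : ℕ) (hc : 0 < c) :
    Measurable (radialCutoffDivergence n c) := by
  have := (continuous_radialCutoff hc).measurable
  unfold radialCutoffDivergence radialCutoffDeriv
  fun_prop

end RadialCutoff

section Ray

variable {F : Type*} [NormedAddCommGroup F] [InnerProductSpace ℝ F] [CompleteSpace F]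
  {U : F → ℝ} {L m R : ℝ}

theorem ContDiff.continuous_gradient (hU : ContDiff ℝ 1 U) : Continuous (gradient U) :=
  (toDual ℝ F).symm.continuous.comp (hU.continuous_fderiv one_ne_zero)

theorem hasDerivAt_comp_smul_const (hU : Differentiable ℝ U) (u : F) (t : ℝ) :
    HasDerivAt (fun s : ℝ => U (s • u)) ⟪gradient U (t • u), u⟫_ℝ t := by
  have hline : HasDerivAt (fun s : ℝ => s • u) u t := by
    simpa using (hasDerivAt_id t).smul_const u
  rw [inner_gradient_left]
  exact (hU (t • u)).hasFDerivAt.comp_hasDerivAt t hline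

theorem hasDerivAt_pow_mul_radialCutoff_mul_exp_neg (hU : Differentiable ℝ U) {c : ℝ}
    (hc : 0 < c) {n : ℕ} (hn : n ≠ 0) {u : F} (hu : ‖u‖ = 1) {t : ℝ} (ht : 0 < t) :
    HasDerivAt (fun s => s ^ n * (radialCutoff c ‖s • u‖ * exp (-U (s • u))))
      (t ^ (n - 1) * (radialCutoffDivergence n c ‖t • u‖ * exp (-U (t • u)) -
        radialCutoff c ‖t • u‖ * ⟪gradient U (t • u), t • u⟫_ℝ * exp (-U (t • u)))) t := by
  have hnorm : ∀ s : ℝ, 0 < s → ‖s • u‖ = s := fun s hs => by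
    rw [norm_smul, hu, mul_one, norm_of_nonneg hs.le]
  have hev : (fun s => s ^ n * (radialCutoff c ‖s • u‖ * exp (-U (s • u)))) =ᶠ[𝓝 t]
      fun s => s ^ n * (radialCutoff c s * exp (-U (s • u))) := by
    filter_upwards [Ioi_mem_nhds ht] with s hs
    rw [hnorm s hs]
  refine (((hasDerivAt_pow n t).mul ((hasDerivAt_radialCutoff hc t).mul
    (hasDerivAt_comp_smul_const hU u t).neg.exp)).congr_of_eventuallyEq hev).congr_deriv ?_
  obtain ⟨k, rfl⟩ := Nat.exists_eq_add_one_of_ne_zero hn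
  rw [hnorm t ht, real_inner_smul_right, radialCutoffDivergence]
  simp only [Nat.add_sub_cancel, pow_succ, Nat.cast_add, Nat.cast_one, Pi.mul_apply, Pi.neg_apply]
  ring

theorem inner_gradient_smul_ge_of_dissipative (hL : 0 ≤ L) (hm : 0 ≤ m) (hR : 0 ≤ R)
    (hgrad : ∀ x, ‖gradient U x‖ ≤ L * ‖x‖)
    (hdiss : ∀ x, R < ‖x‖ → m * ‖x‖ ^ 2 ≤ ⟪gradient U x, x⟫_ℝ)
    {u : F} (hu : ‖u‖ = 1) {t : ℝ} (ht : 0 ≤ t) :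
    m * t - (L + m) * R ≤ ⟪gradient U (t • u), u⟫_ℝ := by
  have hnorm : ‖t • u‖ = t := by rw [norm_smul, hu, mul_one, norm_of_nonneg ht]
  rcases le_or_gt t R with htR | htR
  · have hcs : -(L * t) ≤ ⟪gradient U (t • u), u⟫_ℝ := by
      have := (abs_real_inner_le_norm (gradient U (t • u)) u).trans
        (by simpa [hu, hnorm] using hgrad (t • u))
      linarith [neg_abs_le ⟪gradient U (t • u), u⟫_ℝ]
    nlinarith
  · have hrad := hdiss (t • u) (by rwa [hnorm])
    rw [hnorm, real_inner_smul_right, show m * t ^ 2 = t * (m * t) by ring] at hrad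
    have := le_of_mul_le_mul_left hrad (hR.trans_lt htR)
    nlinarith

theorem quadratic_lower_bound_of_dissipative (hU : ContDiff ℝ 1 U) (hL : 0 ≤ L) (hm : 0 ≤ m)
    (hR : 0 ≤ R) (hgrad : ∀ x, ‖gradient U x‖ ≤ L * ‖x‖)
    (hdiss : ∀ x, R < ‖x‖ → m * ‖x‖ ^ 2 ≤ ⟪gradient U x, x⟫_ℝ) (x : F) :
    U 0 + m / 2 * ‖x‖ ^ 2 - (L + m) * R * ‖x‖ ≤ U x := by
  rcases eq_or_ne x 0 with rfl | hx
  · simp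
  set s := ‖x‖
  have hs : 0 < s := norm_pos_iff.2 hx
  set u := s⁻¹ • x
  have hxu : s • u = x := smul_inv_smul₀ hs.ne' x
  have hu : ‖u‖ = 1 := by simp [u, s, norm_smul, hs.ne']
  have hradial : Continuous fun t : ℝ => ⟪gradient U (t • u), u⟫_ℝ :=
    (hU.continuous_gradient.comp (continuous_id.smul continuous_const)).inner continuous_const
  have hftc : ∫ t in (0 : ℝ)..s, ⟪gradient U (t • u), u⟫_ℝ = U x - U 0 := by
    rw [intervalIntegral.integral_eq_sub_of_hasDerivAt
      (fun t _ => hasDerivAt_comp_smul_const (hU.differentiable one_ne_zero) u t)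
      (hradial.intervalIntegrable 0 s), hxu, zero_smul]
  have hmono : ∫ t in (0 : ℝ)..s, (m * t - (L + m) * R) ≤
      ∫ t in (0 : ℝ)..s, ⟪gradient U (t • u), u⟫_ℝ :=
    intervalIntegral.integral_mono_on hs.le
      ((by fun_prop : Continuous fun t : ℝ => m * t - (L + m) * R).intervalIntegrable 0 s)
      (hradial.intervalIntegrable 0 s)
      fun t ht => inner_gradient_smul_ge_of_dissipative hL hm hR hgrad hdiss hu ht.1
  have hlin : ∫ t in (0 : ℝ)..s, (m * t - (L + m) * R) = m / 2 * s ^ 2 - (L + m) * R * s := by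
    rw [intervalIntegral.integral_sub
        ((by fun_prop : Continuous fun t : ℝ => m * t).intervalIntegrable 0 s)
        intervalIntegrable_const,
      intervalIntegral.integral_const_mul, integral_id, intervalIntegral.integral_const]
    simp only [smul_eq_mul]
    ring
  linarith

theorem exists_exp_neg_le_of_dissipative (hU : ContDiff ℝ 1 U) (hL : 0 ≤ L) (hm : 0 < m)
    (hR : 0 ≤ R) (hgrad : ∀ x, ‖gradient U x‖ ≤ L * ‖x‖)
    (hdiss : ∀ x, R < ‖x‖ → m * ‖x‖ ^ 2 ≤ ⟪gradient U x, x⟫_ℝ) :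
    ∃ K, ∀ x, exp (-U x) ≤ K * exp (-(m / 4) * ‖x‖ ^ 2) := by
  refine ⟨exp (-U 0 + ((L + m) * R) ^ 2 / m), fun x => ?_⟩
  rw [← exp_add, exp_le_exp]
  have hamgm : (L + m) * R * ‖x‖ ≤ m / 4 * ‖x‖ ^ 2 + ((L + m) * R) ^ 2 / m := by
    rw [← sub_nonneg, show m / 4 * ‖x‖ ^ 2 + ((L + m) * R) ^ 2 / m - (L + m) * R * ‖x‖
      = (m * ‖x‖ / 2 - (L + m) * R) ^ 2 / m by field_simp; ring]
    positivity
  linarith [quadratic_lower_bound_of_dissipative hU hL hm.le hR hgrad hdiss x]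

theorem norm_sq_le_of_dissipative (hm : 0 < m) (hR : 0 ≤ R)
    (hdiss : ∀ x, R < ‖x‖ → m * ‖x‖ ^ 2 ≤ ⟪gradient U x, x⟫_ℝ) (x : F) :
    ‖x‖ ^ 2 ≤ 16 * R ^ 2 + 2 / m * (radialCutoff R ‖x‖ * ⟪gradient U x, x⟫_ℝ) := by
  have hweighted :
      m * (radialCutoff R ‖x‖ * ‖x‖ ^ 2) ≤ radialCutoff R ‖x‖ * ⟪gradient U x, x⟫_ℝ := by
    rcases le_or_gt ‖x‖ R with h | h
    · simp [radialCutoff_of_le h]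
    · nlinarith [mul_le_mul_of_nonneg_left (hdiss x h) (radialCutoff_nonneg (c := R) (t := ‖x‖))]
  have hsplit : ‖x‖ ^ 2 ≤ 16 * R ^ 2 + 2 * (radialCutoff R ‖x‖ * ‖x‖ ^ 2) := by
    rcases le_or_gt ‖x‖ (4 * R) with h | h
    · nlinarith [norm_nonneg x, radialCutoff_nonneg (c := R) (t := ‖x‖)]
    · nlinarith [one_half_le_radialCutoff hR h.le (by linarith)]
  have hdiv : radialCutoff R ‖x‖ * ‖x‖ ^ 2 ≤ radialCutoff R ‖x‖ * ⟪gradient U x, x⟫_ℝ / m := by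
    rw [le_div_iff₀ hm]
    linarith
  calc ‖x‖ ^ 2 ≤ 16 * R ^ 2 + 2 * (radialCutoff R ‖x‖ * ‖x‖ ^ 2) := hsplit
    _ ≤ 16 * R ^ 2 + 2 * (radialCutoff R ‖x‖ * ⟪gradient U x, x⟫_ℝ / m) := by gcongr
    _ = _ := by ring

end Ray

theorem tendsto_pow_mul_exp_neg_mul_sq_atTop {b : ℝ} (hb : 0 < b) (n : ℕ) :
    Tendsto (fun t : ℝ => t ^ n * exp (-b * t ^ 2)) atTop (𝓝 0) := by
  refine ((tendsto_rpow_abs_mul_exp_neg_mul_sq_cocompact hb n).mono_left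
    atTop_le_cocompact).congr' ?_
  filter_upwards [eventually_ge_atTop 0] with t ht
  rw [abs_of_nonneg ht, rpow_natCast]

theorem integral_Ioi_eq_zero_of_hasDerivAt {g g' : ℝ → ℝ} {a : ℝ}
    (hcont : ContinuousWithinAt g (Ici a) a) (hga : g a = 0)
    (hderiv : ∀ t ∈ Ioi a, HasDerivAt g (g' t) t) (hlim : Tendsto g atTop (𝓝 0)) :
    ∫ t in Ioi a, g' t = 0 := by
  by_cases hint : IntegrableOn g' (Ioi a)
  · rw [integral_Ioi_of_hasDerivAt_of_tendsto hcont hderiv hint hlim, hga, sub_zero]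
  · exact integral_undef hint

section Polar

variable {E : Type*} [NormedAddCommGroup E] [NormedSpace ℝ E] [FiniteDimensional ℝ E]
  [MeasurableSpace E] [BorelSpace E] (μ : Measure E) [μ.IsAddHaarMeasure]

theorem integrable_norm_pow_mul_exp_neg_mul_sq {b : ℝ} (hb : 0 < b) (k : ℕ) :
    Integrable (fun x : E => ‖x‖ ^ k * exp (-b * ‖x‖ ^ 2)) μ := by
  rcases subsingleton_or_nontrivial E with hE | hE
  · exact Integrable.of_finite
  rw [integrable_fun_norm_addHaar μ (f := fun y => y ^ k * exp (-b * y ^ 2))]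
  refine (integrableOn_rpow_mul_exp_neg_mul_sq hb (s := (Module.finrank ℝ E - 1 + k : ℕ))
    (neg_one_lt_zero.trans_le (Nat.cast_nonneg _))).congr_fun (fun y _ => ?_) measurableSet_Ioi
  simp only [rpow_natCast, smul_eq_mul, pow_add]
  ring

theorem integral_eq_integral_toSphere_integral_Ioi [Nontrivial E] {f : E → ℝ}
    (hf : Integrable f μ) :
    ∫ x, f x ∂μ = ∫ u, (∫ t in Ioi (0 : ℝ),
      t ^ (Module.finrank ℝ E - 1) * f (t • (u : E))) ∂μ.toSphere := by
  have hpolar := μ.measurePreserving_homeomorphUnitSphereProd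
  have hcomp : ∀ x : ({0}ᶜ : Set E), f (((homeomorphUnitSphereProd E x).2 : ℝ) •
      ((homeomorphUnitSphereProd E x).1 : E)) = f x := by
    rintro ⟨x, hx⟩
    simp [smul_inv_smul₀ (norm_ne_zero_iff.2 hx)]
  have hint : Integrable (fun p : sphere (0 : E) 1 × Ioi (0 : ℝ) => f ((p.2 : ℝ) • (p.1 : E)))
      (μ.toSphere.prod (.volumeIoiPow (Module.finrank ℝ E - 1))) := by
    rw [← hpolar.integrable_comp_emb (Homeomorph.measurableEmbedding _), Function.comp_def]
    simp only [hcomp]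
    exact (integrableOn_iff_comap_subtypeVal (measurableSet_singleton _).compl).1 hf.integrableOn
  calc ∫ x, f x ∂μ = ∫ x : ({0}ᶜ : Set E), f x ∂(μ.comap (↑)) := by
        rw [integral_subtype_comap (measurableSet_singleton _).compl, restrict_compl_singleton]
    _ = ∫ p, f ((p.2 : ℝ) • (p.1 : E))
          ∂(μ.toSphere.prod (.volumeIoiPow (Module.finrank ℝ E - 1))) := by
        rw [← hpolar.integral_comp (Homeomorph.measurableEmbedding _)]
        simp only [hcomp]
    _ = ∫ u, (∫ t, f ((t : ℝ) • (u : E)) ∂(.volumeIoiPow (Module.finrank ℝ E - 1))) ∂μ.toSphere :=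
        integral_prod _ hint
    _ = _ := by
        congr 1 with u
        simp only [Measure.volumeIoiPow, ENNReal.ofReal]
        rw [integral_withDensity_eq_integral_smul
            ((measurable_subtype_coe.pow_const _).real_toNNReal),
          integral_subtype_comap measurableSet_Ioi
            (fun t => Real.toNNReal (t ^ (Module.finrank ℝ E - 1)) • f (t • (u : E)))]
        refine setIntegral_congr_fun measurableSet_Ioi fun t ht => ?_
        rw [NNReal.smul_def, Real.coe_toNNReal _ (pow_nonneg (le_of_lt ht) _), smul_eq_mul]

theorem integral_eq_zero_of_hasDerivAt_ray [Nontrivial E] {f Φ : E → ℝ} (hf : Integrable f μ)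
    (hΦ : ContinuousAt Φ 0)
    (hderiv : ∀ u : E, ‖u‖ = 1 → ∀ t > 0, HasDerivAt (fun s => s ^ Module.finrank ℝ E * Φ (s • u))
      (t ^ (Module.finrank ℝ E - 1) * f (t • u)) t)
    (hlim : ∀ u : E, ‖u‖ = 1 →
      Tendsto (fun t => t ^ Module.finrank ℝ E * Φ (t • u)) atTop (𝓝 0)) :
    ∫ x, f x ∂μ = 0 := by
  rw [integral_eq_integral_toSphere_integral_Ioi μ hf]
  refine integral_eq_zero_of_ae (Eventually.of_forall fun u => ?_)
  have hu : ‖(u : E)‖ = 1 := norm_eq_of_mem_sphere u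
  refine integral_Ioi_eq_zero_of_hasDerivAt ?_ (by simp [Module.finrank_pos.ne'])
    (hderiv u hu) (hlim u hu)
  have hray : ContinuousAt (fun s : ℝ => Φ (s • (u : E))) 0 :=
    hΦ.comp_of_eq (continuous_id.smul continuous_const).continuousAt (zero_smul ℝ _)
  exact ((continuous_pow _).continuousAt.mul hray).continuousWithinAt

theorem integrable_norm_pow_mul_exp_neg_of_le_gaussian {U : E → ℝ} (hU : Continuous U) {K b : ℝ}
    (hb : 0 < b) (hdom : ∀ x, exp (-U x) ≤ K * exp (-b * ‖x‖ ^ 2)) (k : ℕ) :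
    Integrable (fun x => ‖x‖ ^ k * exp (-U x)) μ := by
  refine ((integrable_norm_pow_mul_exp_neg_mul_sq μ hb k).const_mul K).mono'
    (by fun_prop : Continuous fun x => ‖x‖ ^ k * exp (-U x)).aestronglyMeasurable
    (Eventually.of_forall fun x => ?_)
  rw [norm_of_nonneg (by positivity)]
  calc ‖x‖ ^ k * exp (-U x) ≤ ‖x‖ ^ k * (K * exp (-b * ‖x‖ ^ 2)) := by gcongr; exact hdom x
    _ = K * (‖x‖ ^ k * exp (-b * ‖x‖ ^ 2)) := by ring

end Polar

section Integrability

variable {F : Type*} [NormedAddCommGroup F] [MeasurableSpace F] [BorelSpace F] (μ : Measure F)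
  {U : F → ℝ} {c : ℝ}

theorem integrable_radialCutoffDivergence_mul_exp_neg (n : ℕ) (hU : Continuous U) (hc : 0 < c)
    (hexp : Integrable (fun x => exp (-U x)) μ) :
    Integrable (fun x => radialCutoffDivergence n c ‖x‖ * exp (-U x)) μ := by
  refine (hexp.const_mul (n + 2)).mono' ?_ (Eventually.of_forall fun x => ?_)
  · have := measurable_radialCutoffDivergence n hc
    exact Measurable.aestronglyMeasurable (by fun_prop)
  · rw [norm_mul, norm_of_nonneg (exp_nonneg _),
      norm_of_nonneg (radialCutoffDivergence_nonneg hc.le (norm_nonneg x))]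
    gcongr
    exact radialCutoffDivergence_le_add_two hc.le

theorem integrable_radialCutoff_mul_inner_gradient_mul_exp_neg [InnerProductSpace ℝ F]
    [CompleteSpace F] (hU : ContDiff ℝ 1 U) (hc : 0 < c)
    {L : ℝ} (hgrad : ∀ x, ‖gradient U x‖ ≤ L * ‖x‖)
    (hsq : Integrable (fun x => ‖x‖ ^ 2 * exp (-U x)) μ) :
    Integrable (fun x => radialCutoff c ‖x‖ * ⟪gradient U x, x⟫_ℝ * exp (-U x)) μ := by
  refine (hsq.const_mul L).mono' ?_ (Eventually.of_forall fun x => ?_)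
  · have := hU.continuous_gradient
    have := hU.continuous
    have := continuous_radialCutoff hc
    exact Continuous.aestronglyMeasurable (by fun_prop)
  · rw [norm_mul, norm_mul, norm_of_nonneg (exp_nonneg _), norm_of_nonneg radialCutoff_nonneg]
    calc radialCutoff c ‖x‖ * ‖⟪gradient U x, x⟫_ℝ‖ * exp (-U x)
        ≤ 1 * (L * ‖x‖ * ‖x‖) * exp (-U x) := by
          gcongr
          · exact radialCutoff_le_one hc.le
          · exact (norm_inner_le_norm _ _).trans (by gcongr; exact hgrad x)
      _ = L * (‖x‖ ^ 2 * exp (-U x)) := by ring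

end Integrability

section IntegrationByParts

variable {F : Type*} [NormedAddCommGroup F] [InnerProductSpace ℝ F] [FiniteDimensional ℝ F]
  [MeasurableSpace F] [BorelSpace F] (μ : Measure F) [μ.IsAddHaarMeasure] {U : F → ℝ} {c : ℝ}

theorem integral_radialCutoff_mul_inner_gradient [Nontrivial F] (hU : ContDiff ℝ 1 U)
    (hc : 0 < c) {K b L : ℝ} (hb : 0 < b) (hdom : ∀ x, exp (-U x) ≤ K * exp (-b * ‖x‖ ^ 2))
    (hgrad : ∀ x, ‖gradient U x‖ ≤ L * ‖x‖) :
    ∫ x, radialCutoff c ‖x‖ * ⟪gradient U x, x⟫_ℝ * exp (-U x) ∂μ =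
      ∫ x, radialCutoffDivergence (Module.finrank ℝ F) c ‖x‖ * exp (-U x) ∂μ := by
  set n := Module.finrank ℝ F
  have hexp : Integrable (fun x => exp (-U x)) μ := by
    simpa using integrable_norm_pow_mul_exp_neg_of_le_gaussian μ hU.continuous hb hdom 0
  have hdivergence := integrable_radialCutoffDivergence_mul_exp_neg μ n hU.continuous hc hexp
  have hinner := integrable_radialCutoff_mul_inner_gradient_mul_exp_neg μ hU hc hgrad
    (integrable_norm_pow_mul_exp_neg_of_le_gaussian μ hU.continuous hb hdom 2)
  have hlim : ∀ u : F, ‖u‖ = 1 → Tendsto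
      (fun t => t ^ n * (radialCutoff c ‖t • u‖ * exp (-U (t • u)))) atTop (𝓝 0) := by
    intro u hu
    have hgauss := (tendsto_pow_mul_exp_neg_mul_sq_atTop hb n).const_mul K
    rw [mul_zero] at hgauss
    refine squeeze_zero' ?_ ?_ hgauss
    · filter_upwards [eventually_ge_atTop 0] with t ht
      exact mul_nonneg (pow_nonneg ht _) (mul_nonneg radialCutoff_nonneg (exp_nonneg _))
    · filter_upwards [eventually_gt_atTop 0] with t ht
      have hnorm : ‖t • u‖ = t := by rw [norm_smul, hu, mul_one, norm_of_nonneg ht.le]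
      calc t ^ n * (radialCutoff c ‖t • u‖ * exp (-U (t • u)))
          ≤ t ^ n * (1 * (K * exp (-b * ‖t • u‖ ^ 2))) := by
            gcongr
            · exact radialCutoff_le_one hc.le
            · exact hdom _
        _ = K * (t ^ n * exp (-b * t ^ 2)) := by rw [hnorm]; ring
  have hzero := integral_eq_zero_of_hasDerivAt_ray μ (hdivergence.sub hinner)
    (Φ := fun x => radialCutoff c ‖x‖ * exp (-U x))
    (by have := hU.continuous; have := continuous_radialCutoff hc; fun_prop)
    (fun u hu t ht => hasDerivAt_pow_mul_radialCutoff_mul_exp_neg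
      (hU.differentiable one_ne_zero) hc Module.finrank_pos.ne' hu ht) hlim
  simp only [Pi.sub_apply] at hzero
  rw [integral_sub hdivergence hinner, sub_eq_zero] at hzero
  exact hzero.symm

theorem integral_norm_sq_mul_exp_neg_le (hU : ContDiff ℝ 1 U) {L m R : ℝ} (hL : 0 ≤ L)
    (hm : 0 < m) (hR : 0 < R) (hgrad : ∀ x, ‖gradient U x‖ ≤ L * ‖x‖)
    (hdiss : ∀ x, R < ‖x‖ → m * ‖x‖ ^ 2 ≤ ⟪gradient U x, x⟫_ℝ) :
    ∫ x, ‖x‖ ^ 2 * exp (-U x) ∂μ ≤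
      (2 * Module.finrank ℝ F / m + 16 * R ^ 2) * ∫ x, exp (-U x) ∂μ := by
  rcases subsingleton_or_nontrivial F with hF | hF
  · have hZ : 0 ≤ ∫ x, exp (-U x) ∂μ := integral_nonneg fun x => (exp_pos _).le
    simp only [Subsingleton.elim _ (0 : F), norm_zero, zero_pow two_ne_zero, zero_mul,
      integral_zero]
    positivity
  obtain ⟨K, hdom⟩ := exists_exp_neg_le_of_dissipative hU hL hm hR.le hgrad hdiss
  have hb : 0 < m / 4 := by positivity
  have hexp : Integrable (fun x => exp (-U x)) μ := by
    simpa using integrable_norm_pow_mul_exp_neg_of_le_gaussian μ hU.continuous hb hdom 0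
  have hsq := integrable_norm_pow_mul_exp_neg_of_le_gaussian μ hU.continuous hb hdom 2
  have hinner := integrable_radialCutoff_mul_inner_gradient_mul_exp_neg μ hU hR hgrad hsq
  have hdivergence := integrable_radialCutoffDivergence_mul_exp_neg μ
    (Module.finrank ℝ F) hU.continuous hR hexp
  calc ∫ x, ‖x‖ ^ 2 * exp (-U x) ∂μ
      ≤ ∫ x, (16 * R ^ 2 * exp (-U x) +
          2 / m * (radialCutoff R ‖x‖ * ⟪gradient U x, x⟫_ℝ * exp (-U x))) ∂μ := by
        refine integral_mono hsq ((hexp.const_mul _).add (hinner.const_mul _)) fun x => ?_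
        have := mul_le_mul_of_nonneg_right (norm_sq_le_of_dissipative hm hR.le hdiss x)
          (exp_pos (-U x)).le
        linarith
    _ = 16 * R ^ 2 * ∫ x, exp (-U x) ∂μ +
          2 / m * ∫ x, radialCutoffDivergence (Module.finrank ℝ F) R ‖x‖ * exp (-U x) ∂μ := by
        rw [integral_add (hexp.const_mul _) (hinner.const_mul _), integral_const_mul,
          integral_const_mul, integral_radialCutoff_mul_inner_gradient μ hU hR hb hdom hgrad]
    _ ≤ 16 * R ^ 2 * ∫ x, exp (-U x) ∂μ +
          2 / m * ∫ x, Module.finrank ℝ F * exp (-U x) ∂μ := by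
        gcongr
        · exact hexp.const_mul _
        · exact fun x => mul_le_mul_of_nonneg_right
            (radialCutoffDivergence_le Module.finrank_pos hR.le) (exp_pos _).le
    _ = _ := by
        rw [integral_const_mul]
        ring

end IntegrationByParts

/-- Second-moment bound for the invariant measure p*(x) ∝ exp(-U(x)) where U is L-smooth,
∇U(0) = 0, and m-strongly convex outside a ball of radius R:
E_{x∼p*}[‖x‖²] ≤ 2d/m + 18R². -/
theorem second_moment_bound_pstar {d : ℕ} (L m R Z : ℝ)
    (hL : 0 < L) (hm : 0 < m) (hR : 0 < R)
    (U : EuclideanSpace ℝ (Fin d) → ℝ) (hU : ContDiff ℝ 1 U)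
    (hlip : ∀ a b : EuclideanSpace ℝ (Fin d),
      ‖gradient U a - gradient U b‖ ≤ L * ‖a - b‖)
    (hgrad0 : gradient U 0 = 0)
    (hsc : ∀ a b : EuclideanSpace ℝ (Fin d), R < ‖a - b‖ →
      m * ‖a - b‖ ^ 2 ≤ ⟪gradient U a - gradient U b, a - b⟫_ℝ)
    (hZ : Z = ∫ x : EuclideanSpace ℝ (Fin d), Real.exp (-U x))
    (hZpos : 0 < Z)
    (p : Measure (EuclideanSpace ℝ (Fin d)))
    (hp : p = volume.withDensity fun x => ENNReal.ofReal (Real.exp (-U x) / Z)) :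
    ∫ x, ‖x‖ ^ 2 ∂p ≤ 2 * d / m + 18 * R ^ 2 := by
  have hgrad : ∀ x, ‖gradient U x‖ ≤ L * ‖x‖ := fun x => by simpa [hgrad0] using hlip x 0
  have hdiss : ∀ x, R < ‖x‖ → m * ‖x‖ ^ 2 ≤ ⟪gradient U x, x⟫_ℝ := fun x hx => by
    simpa [hgrad0] using hsc x 0 (by simpa using hx)
  have hmoment := integral_norm_sq_mul_exp_neg_le volume hU hL.le hm hR hgrad hdiss
  rw [finrank_euclideanSpace_fin, ← hZ] at hmoment
  have hdensity : ∫ x, ‖x‖ ^ 2 ∂p = (∫ x, ‖x‖ ^ 2 * exp (-U x)) / Z := by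
    rw [hp, integral_withDensity_eq_integral_toReal_smul
      (by have := hU.continuous; fun_prop)
      (Eventually.of_forall fun _ => ENNReal.ofReal_lt_top), ← integral_div]
    congr 1 with x
    rw [ENNReal.toReal_ofReal (by positivity), smul_eq_mul]
    ring
  rw [hdensity, div_le_iff₀ hZpos]
  calc _ ≤ _ := hmoment
    _ ≤ (2 * d / m + 18 * R ^ 2) * Z := by gcongr; norm_num
end
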